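/- arXiv:2011.03823 — 2 statements merged into one kernel-verified Lean document; each statement's English description precedes it below -/
import Mathlib

section
/- Let Γ be a finite connected quiver. There exists an arrow positive function on Γ if and only if Γ does not contain any non-symmetric cycle. -/
/-! An arrow positive function is a potential whose difference along every arrow is `1`, so along
any walk it changes by the number of forward minus the number of backward arrows. Hence a closed
walk must be symmetric. Conversely, if every closed walk is symmetric then this difference only
depends on the endpoints of a walk, and measuring it from a fixed base vertex yields an
integer-valued potential; since the quiver is finite it can be shifted to take values in `ℕ`. -/

universe u v

/-- A quiver is connected if its underlying undirected graph is connected. -/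
def QuiverConnected (V : Type u) [Quiver.{v + 1} V] : Prop :=
  ∀ a b : V, Nonempty (@Quiver.Path (Quiver.Symmetrify V) _ a b)

/-- The number of arrows of a walk (a path in the symmetrification) traversed in the
forward direction. -/
def fwdCount {V : Type u} [Quiver.{v + 1} V] :
    ∀ {a b : Quiver.Symmetrify V}, Quiver.Path a b → ℕ
  | _, _, Quiver.Path.nil => 0
  | _, _, Quiver.Path.cons p e => fwdCount p + Sum.elim (fun _ => 1) (fun _ => 0) e

/-- The number of arrows of a walk traversed in the backward direction. -/
def bwdCount {V : Type u} [Quiver.{v + 1} V] :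
    ∀ {a b : Quiver.Symmetrify V}, Quiver.Path a b → ℕ
  | _, _, Quiver.Path.nil => 0
  | _, _, Quiver.Path.cons p e => bwdCount p + Sum.elim (fun _ => 0) (fun _ => 1) e

open Quiver

variable {V : Type u} [Quiver.{v + 1} V]

def IsArrowPositive {R : Type*} [Add R] [One R] (G : V → R) : Prop :=
  ∀ ⦃i j : V⦄, (i ⟶ j) → G j = G i + 1

def walkHeight {a b : Symmetrify V} (p : Path a b) : ℤ := fwdCount p - bwdCount p

@[simp]
lemma walkHeight_nil (a : Symmetrify V) : walkHeight (Path.nil : Path a a) = 0 := by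
  simp [walkHeight, fwdCount, bwdCount]

lemma walkHeight_cons {a b c : Symmetrify V} (p : Path a b) (e : b ⟶ c) :
    walkHeight (p.cons e) = walkHeight p + Sum.elim (fun _ => 1) (fun _ => -1) e := by
  rcases e with f | f <;> simp [walkHeight, fwdCount, bwdCount] <;> ring

lemma walkHeight_toPath {a b : Symmetrify V} (e : a ⟶ b) :
    walkHeight e.toPath = Sum.elim (fun _ => 1) (fun _ => -1) e := by
  rw [← Path.nil_comp e.toPath, Path.comp_toPath_eq_cons, walkHeight_cons, walkHeight_nil,
    zero_add]

lemma walkHeight_comp {a b c : Symmetrify V} (p : Path a b) (q : Path b c) :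
    walkHeight (p.comp q) = walkHeight p + walkHeight q := by
  induction q with
  | nil => simp
  | cons q e ih => rw [Path.comp_cons, walkHeight_cons, walkHeight_cons, ih, add_assoc]

lemma walkHeight_reverse {a b : Symmetrify V} (p : Path a b) :
    walkHeight p.reverse = -walkHeight p := by
  induction p with
  | nil => simp
  | cons p e ih =>
    rw [Path.reverse, walkHeight_comp, ih, walkHeight_cons, walkHeight_toPath]
    rcases e with f | f <;> simp [Quiver.reverse, HasReverse.reverse']

lemma IsArrowPositive.walkHeight_eq_sub {G : V → ℤ} (hG : IsArrowPositive G)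
    {a b : Symmetrify V} (p : Path a b) : walkHeight p = G b - G a := by
  induction p with
  | nil => simp
  | cons p e ih =>
    rw [walkHeight_cons, ih]
    rcases e with f | f <;> simp [hG f] <;> ring

lemma walkHeight_eq_of_forall_cycle (hcyc : ∀ (a : Symmetrify V) (c : Path a a), walkHeight c = 0)
    {a b : Symmetrify V} (p q : Path a b) : walkHeight p = walkHeight q := by
  have h := hcyc a (p.comp q.reverse)
  rw [walkHeight_comp, walkHeight_reverse] at h
  linarith

lemma exists_isArrowPositive_int_of_forall_cycle (hconn : QuiverConnected V)
    (hcyc : ∀ (a : Symmetrify V) (c : Path a a), walkHeight c = 0) :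
    ∃ G : V → ℤ, IsArrowPositive G := by
  rcases isEmpty_or_nonempty V with hV | ⟨⟨v₀⟩⟩
  · exact ⟨isEmptyElim, fun i => isEmptyElim i⟩
  refine ⟨fun a => walkHeight (hconn v₀ a).some, fun i j f => ?_⟩
  calc walkHeight (hconn v₀ j).some
      = walkHeight ((hconn v₀ i).some.cons (Sum.inl f : @Quiver.Hom (Symmetrify V) _ i j)) :=
        walkHeight_eq_of_forall_cycle hcyc _ _
    _ = walkHeight (hconn v₀ i).some + 1 := walkHeight_cons _ _

lemma IsArrowPositive.exists_nat [Finite V] {G : V → ℤ} (hG : IsArrowPositive G) :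
    ∃ F : V → ℕ, IsArrowPositive F := by
  obtain ⟨m, hm⟩ := (Set.finite_range G).bddBelow
  refine ⟨fun i => (G i - m).toNat, fun i j f => ?_⟩
  have hstep := hG f
  have hmi : m ≤ G i := hm ⟨i, rfl⟩
  dsimp only
  omega

/-- There exists an arrow positive function on a finite connected quiver iff every
cycle (closed walk in the underlying undirected graph) is symmetric, i.e. has equally
many forward and backward arrows. -/
theorem exists_arrowPositiveFunction_iff_cycles_symmetric (V : Type u)
    [Quiver.{v + 1} V] [Finite V] (hconn : QuiverConnected V) :
    (∃ F : V → ℕ, ∀ ⦃i j : V⦄, (i ⟶ j) → F j = F i + 1) ↔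
      (∀ (a : Quiver.Symmetrify V) (p : Quiver.Path a a), fwdCount p = bwdCount p) := by
  constructor
  · rintro ⟨F, hF⟩ a p
    have hF' : IsArrowPositive fun i => (F i : ℤ) := fun i j f => by simp [hF f]
    simpa [walkHeight, sub_eq_zero] using hF'.walkHeight_eq_sub p
  · intro hsymm
    obtain ⟨G, hG⟩ := exists_isArrowPositive_int_of_forall_cycle hconn
      fun a c => by simp [walkHeight, hsymm a c]
    exact hG.exists_nat
end

section
/- Let G be a free abelian group with basis B and φ : G → G the homomorphism induced by an involution σ : B → B with no fixed points (σ² = id, σ(b) ≠ b for all b ∈ B). Then the set of elements x ∈ G with φ(x) = x is exactly the subgroup generated by {b + σ(b) : b ∈ B}. -/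
/-! A fixed point `x` of `φ` has `σ`-invariant coefficients. Since `σ` has no fixed points, a
well-order on `B` picks one element of every pair `{b, σ b}`, namely the smaller one; if `c` is
the coefficient vector of `x` restricted to these representatives, then the coefficients of `x`
are `c + c ∘ σ`, so `x = ∑ c b • (b + σ b)`. -/

open Function Submodule

theorem Function.Involutive.exists_set_mem_iff_apply_notMem {B : Type*} {σ : B → B}
    (hσ : Involutive σ) (hfix : ∀ b, σ b ≠ b) : ∃ S : Set B, ∀ b, b ∈ S ↔ σ b ∉ S := by
  let _ : LinearOrder B := WellOrderingRel.isWellOrder.linearOrder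
  refine ⟨{b | b < σ b}, fun b => ?_⟩
  simp only [Set.mem_ofPred_eq, hσ b, not_lt]
  exact ⟨le_of_lt, fun h => lt_of_le_of_ne h (hfix b).symm⟩

namespace Module.Basis

variable {ι R M : Type*} [Semiring R] [AddCommMonoid M] [Module R M] (b : Basis ι R M)
  {σ : ι → ι}

theorem repr_map_apply_of_apply_basis_eq (hσ : Function.Injective σ) {f : M →ₗ[R] M}
    (hf : ∀ i, f (b i) = b (σ i)) (x : M) (i : ι) : b.repr (f x) (σ i) = b.repr x i := by
  have hcomp : b.repr.toLinearMap ∘ₗ f = Finsupp.lmapDomain R R σ ∘ₗ b.repr.toLinearMap :=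
    b.ext fun j => by simp [hf, Finsupp.mapDomain_single]
  rw [← LinearEquiv.coe_toLinearMap, ← LinearMap.comp_apply, hcomp, LinearMap.comp_apply,
    Finsupp.lmapDomain_apply, Finsupp.mapDomain_apply hσ, LinearEquiv.coe_toLinearMap]

theorem mem_span_range_add_of_repr_comp_eq (hσ : Involutive σ) (hfix : ∀ i, σ i ≠ i) {x : M}
    (hx : ∀ i, b.repr x (σ i) = b.repr x i) :
    x ∈ span R (Set.range fun i => b i + b (σ i)) := by
  classical
  obtain ⟨S, hS⟩ := hσ.exists_set_mem_iff_apply_notMem hfix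
  set c := (b.repr x).filter (· ∈ S)
  have hsplit : c + Finsupp.mapDomain σ c = b.repr x := by
    ext i
    rw [Finsupp.add_apply, ← hσ i, Finsupp.mapDomain_apply hσ.injective, hσ i,
      Finsupp.filter_apply, Finsupp.filter_apply, hx]
    by_cases hi : i ∈ S
    · simp [hi, (hS i).mp hi]
    · simp [hi, not_not.mp (mt (hS i).mpr hi)]
  rw [← Finsupp.range_linearCombination]
  refine ⟨c, ?_⟩
  conv_rhs => rw [← b.linearCombination_repr x, ← hsplit]
  rw [map_add, Finsupp.linearCombination_mapDomain]
  simp [Finsupp.linearCombination_apply, Finsupp.sum_add, smul_add]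

theorem setOf_map_eq_self_eq_span (hσ : Involutive σ) (hfix : ∀ i, σ i ≠ i) {f : M →ₗ[R] M}
    (hf : ∀ i, f (b i) = b (σ i)) :
    {x | f x = x} = (span R (Set.range fun i => b i + b (σ i)) : Set M) := by
  ext x
  refine ⟨fun hx => b.mem_span_range_add_of_repr_comp_eq hσ hfix fun i => ?_, fun hx => ?_⟩
  · rw [← b.repr_map_apply_of_apply_basis_eq hσ.injective hf x i, Set.mem_ofPred_eq.mp hx]
  · have hle : span R (Set.range fun i => b i + b (σ i)) ≤ LinearMap.eqLocus f LinearMap.id :=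
      span_le.mpr <| Set.range_subset_iff.mpr fun i => by
        simp [hf, hσ i, add_comm]
    exact hle hx

end Module.Basis

universe u w

theorem fixedPoints_of_involution {B : Type u} {G : Type w} [AddCommGroup G] [Module ℤ G]
    (bb : Module.Basis B ℤ G) (σ : B → B)
    (hinv : ∀ b, σ (σ b) = b) (hfix : ∀ b, σ b ≠ b)
    (φ : G →+ G) (hφ : ∀ b : B, φ (bb b) = bb (σ b)) :
    {x : G | φ x = x} =
      (AddSubgroup.closure (Set.range fun b : B => bb b + bb (σ b)) : Set G) := by
  obtain rfl : ‹Module ℤ G› = AddCommGroup.toIntModule G := Subsingleton.elim _ _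
  rw [← span_int_eq_addSubgroupClosure]
  exact bb.setOf_map_eq_self_eq_span hinv hfix (f := φ.toIntLinearMap) hφ
end
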